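/- Let G be a finite connected bipartite simple graph with at least one edge and bipartition of its vertex set into nonempty parts X and Y, and let I = I(G) be its edge ideal over a field K. Then v(I^k) = 2k − 1 for all k ≥ 1 with k ≥ min{ |Y| + 1 − max{deg(x) : x ∈ X}, |X| + 1 − max{deg(y) : y ∈ Y} }. -/

import Mathlib

open MvPolynomial

/-- A graded (homogeneous) ideal: one generated by homogeneous polynomials. -/
def IsHomogeneousIdeal {K : Type*} [Field K] {n : ℕ}
    (I : Ideal (MvPolynomial (Fin n) K)) : Prop :=
  ∃ G : Set (MvPolynomial (Fin n) K),
    (∀ f ∈ G, ∃ d, f.IsHomogeneous d) ∧ I = Ideal.span G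

/-- `Ass(I)`: the associated primes of `S/I`. -/
def Ass {K : Type*} [Field K] {n : ℕ} (I : Ideal (MvPolynomial (Fin n) K)) :
    Set (Ideal (MvPolynomial (Fin n) K)) :=
  associatedPrimes (MvPolynomial (Fin n) K) (MvPolynomial (Fin n) K ⧸ I)

/-- The local v-number `v_p(I)`. -/
noncomputable def vNumberAt {K : Type*} [Field K] {n : ℕ}
    (I p : Ideal (MvPolynomial (Fin n) K)) : ℕ :=
  sInf {d | ∃ f : MvPolynomial (Fin n) K, f.IsHomogeneous d ∧
    I.colon (Ideal.span {f}) = p}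

/-- The v-number `v(I)`. -/
noncomputable def vNumber {K : Type*} [Field K] {n : ℕ}
    (I : Ideal (MvPolynomial (Fin n) K)) : ℕ :=
  sInf {d | ∃ f : MvPolynomial (Fin n) K, ∃ p ∈ Ass I, f.IsHomogeneous d ∧
    I.colon (Ideal.span {f}) = p}

/-- `α(J)`: the least degree of a nonzero element of `J`. -/
noncomputable def alphaNum {K : Type*} [Field K] {n : ℕ}
    (J : Ideal (MvPolynomial (Fin n) K)) : ℕ :=
  sInf {d | ∃ f ∈ J, f ≠ 0 ∧ f.totalDegree = d}

/-- `c(I) = max{α(p) : p ∈ Ass(I)}`. -/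
noncomputable def cNum {K : Type*} [Field K] {n : ℕ}
    (I : Ideal (MvPolynomial (Fin n) K)) : ℕ :=
  sSup (alphaNum '' Ass I)

/-!
Every generator `xᵢxⱼ` of `I = I(G)` has degree 2 and exactly one variable indexed by `B`, so
every monomial of `I^k` has degree `≥ 2k` and `B`-degree `≥ k`.

Lower bound: if `(I^k : f) = p` is prime, then `p ⊇ I` contains some variable `x_v`, and
`x_v f ∈ I^k` forces `deg f ≥ 2k - 1`.

Upper bound: take `x ∈ A` of maximal degree, a neighbour `y` of `x`, and for each `b` in
`S = B \ N(x)` (so `|S| ≤ k - 1`) the next two vertices `a(b), g(b)` on a shortest path from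
`b` to `x`. Then `f = x^(e+1) y^e ∏_{b ∈ S} a(b) g(b)` with `e = k - 1 - |S|` has degree
`2k - 1`. Since `x_b a(b)` is an edge and `g(b)` is closer to `x`, induction on the distance
gives `x_b f ∈ I^k` for every `b ∈ B`; since `f` is a monomial of `B`-degree `k - 1`, every
element of `(I^k : f)` has all its monomials divisible by some `x_b`, `b ∈ B`. Hence
`(I^k : f) = (x_b : b ∈ B)`, a prime. The other half of the minimum is the same with `A` and
`B` exchanged.
-/

namespace MvPolynomial

variable {σ R : Type*}

section WeightIdeal

variable [CommSemiring R] (w : σ → ℕ)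

noncomputable def weightIdeal (c : ℕ) : Ideal (MvPolynomial σ R) :=
  restrictSupportIdeal R {m | c ≤ Finsupp.weight w m}
    fun _ _ hle hm => by
      obtain ⟨d, rfl⟩ := exists_add_of_le hle
      simp only [Set.mem_ofPred_eq, map_add] at hm ⊢
      omega

variable {w}

lemma mem_weightIdeal {c : ℕ} {f : MvPolynomial σ R} :
    f ∈ weightIdeal w c ↔ ∀ m ∈ f.support, c ≤ Finsupp.weight w m :=
  Iff.rfl

lemma mul_mem_weightIdeal {c d : ℕ} {f g : MvPolynomial σ R} (hf : f ∈ weightIdeal w c)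
    (hg : g ∈ weightIdeal w d) : f * g ∈ weightIdeal w (c + d) := by
  classical
  intro m hm
  obtain ⟨m₁, hm₁, m₂, hm₂, rfl⟩ := Finset.mem_add.mp (support_mul f g hm)
  have h₁ := hf hm₁
  have h₂ := hg hm₂
  simp only [Set.mem_ofPred_eq, map_add] at h₁ h₂ ⊢
  omega

lemma pow_le_weightIdeal {c : ℕ} {I : Ideal (MvPolynomial σ R)} (h : I ≤ weightIdeal w c)
    (k : ℕ) : I ^ k ≤ weightIdeal w (k * c) := by
  induction k with
  | zero => intro f _ m _; simp
  | succ k ih =>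
    rw [pow_succ, Nat.succ_mul]
    exact Ideal.mul_le.mpr fun f hf g hg => mul_mem_weightIdeal (ih hf) (h hg)

lemma IsWeightedHomogeneous.mem_weightIdeal {c d : ℕ} {f : MvPolynomial σ R}
    (hf : IsWeightedHomogeneous w f d) (hcd : c ≤ d) : f ∈ weightIdeal w c :=
  MvPolynomial.mem_weightIdeal.mpr fun _ hm => (hf (mem_support_iff.mp hm)).symm ▸ hcd

lemma IsWeightedHomogeneous.le_of_mem_weightIdeal {c d : ℕ} {f : MvPolynomial σ R}
    (hf : IsWeightedHomogeneous w f d) (hf0 : f ≠ 0) (hmem : f ∈ weightIdeal w c) :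
    c ≤ d := by
  obtain ⟨m, hm⟩ := support_nonempty.mpr hf0
  exact (hf (mem_support_iff.mp hm)) ▸ hmem hm

lemma mem_weightIdeal_of_mul_monomial_mem {c : ℕ} {M : σ →₀ ℕ} {g : MvPolynomial σ R}
    (h : g * monomial M 1 ∈ weightIdeal w (c + Finsupp.weight w M)) : g ∈ weightIdeal w c := by
  intro m hm
  have hmM : m + M ∈ (g * monomial M 1).support := by
    rwa [mem_support_iff, coeff_mul_monomial, mul_one, ← mem_support_iff]
  have := h hmM
  simp only [Set.mem_ofPred_eq, map_add] at this ⊢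
  omega

lemma weightIdeal_indicator_le_span_X (s : Set σ) [DecidablePred (· ∈ s)] :
    weightIdeal (fun i => if i ∈ s then 1 else 0) 1 ≤
      Ideal.span (X '' s : Set (MvPolynomial σ R)) := by
  intro f hf
  refine mem_ideal_span_X_image.mpr fun m hm => ?_
  by_contra! hfree
  have := hf hm
  simp only [Set.mem_ofPred_eq, Finsupp.weight_apply, Finsupp.sum] at this
  rw [Finset.sum_eq_zero fun i _ => ?_] at this
  · omega
  · by_cases hi : i ∈ s <;> simp [hi, hfree]

end WeightIdeal

theorem isPrime_span_X_image [CommRing R] [IsDomain R] (s : Set σ) :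
    (Ideal.span (X '' s : Set (MvPolynomial σ R))).IsPrime := by
  classical
  set J := Ideal.span (X '' s : Set (MvPolynomial σ R))
  let kill : MvPolynomial σ R →ₐ[R] MvPolynomial σ R :=
    aeval fun i => if i ∈ s then 0 else X i
  have hX : ∀ i ∈ s, (X i : MvPolynomial σ R) ∈ J :=
    fun i hi => Ideal.subset_span ⟨i, hi, rfl⟩
  have hkill : (Ideal.Quotient.mkₐ R J).comp kill = Ideal.Quotient.mkₐ R J := by
    ext i
    by_cases hi : i ∈ s
    · simp [kill, hi, Ideal.Quotient.eq_zero_iff_mem.mpr (hX i hi)]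
    · simp [kill, hi]
  have hker : J = RingHom.ker kill := by
    refine le_antisymm (Ideal.span_le.mpr ?_) fun f hf => ?_
    · rintro _ ⟨i, hi, rfl⟩
      simp [kill, hi]
    · rw [← Ideal.Quotient.eq_zero_iff_mem, ← Ideal.Quotient.mkₐ_eq_mk R, ← hkill]
      simp [(RingHom.mem_ker).mp hf]
  rw [hker]
  exact RingHom.ker_isPrime _

end MvPolynomial

theorem Ideal.mem_associatedPrimes_of_colon_eq {R : Type*} [CommRing R] {I p : Ideal R} {f : R}
    (hp : p.IsPrime) (h : I.colon (Ideal.span {f}) = p) : p ∈ associatedPrimes R (R ⧸ I) := by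
  refine ⟨hp, Ideal.Quotient.mk I f, ?_⟩
  rw [← hp.radical, ← h]
  congr 1
  ext r
  rw [Submodule.mem_colon_singleton, Ideal.mem_colon_span_singleton, Submodule.mem_bot,
    Algebra.smul_def, Ideal.Quotient.algebraMap_eq, ← map_mul, Ideal.Quotient.eq_zero_iff_mem]

theorem vNumber_eq_of_forall_le {K : Type*} [Field K] {n : ℕ}
    {I : Ideal (MvPolynomial (Fin n) K)} {D : ℕ}
    (hD : ∃ (f : MvPolynomial (Fin n) K) (p : Ideal _),
      p.IsPrime ∧ f.IsHomogeneous D ∧ I.colon (Ideal.span {f}) = p)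
    (hle : ∀ (f : MvPolynomial (Fin n) K) (p : Ideal _) d,
      p.IsPrime → f.IsHomogeneous d → I.colon (Ideal.span {f}) = p → D ≤ d) :
    vNumber I = D := by
  obtain ⟨f, p, hp, hf, hfp⟩ := hD
  have hpAss := Ideal.mem_associatedPrimes_of_colon_eq hp hfp
  refine le_antisymm (Nat.sInf_le ⟨f, p, hpAss, hf, hfp⟩)
    (le_csInf ⟨D, f, p, hpAss, hf, hfp⟩ ?_)
  rintro d ⟨g, q, hq, hg, hgq⟩
  exact hle g q d hq.isPrime hg hgq

theorem SimpleGraph.Reachable.exists_adj_adj_dist_lt {V : Type*} {G : SimpleGraph V} {x b : V}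
    (h : G.Reachable x b) (hne : x ≠ b) (hnadj : ¬G.Adj x b) :
    ∃ a c, G.Adj b a ∧ G.Adj a c ∧ G.dist x c < G.dist x b := by
  obtain ⟨p, hp⟩ := h.symm.exists_walk_length_eq_dist
  rw [SimpleGraph.dist_comm] at hp
  match p, hp with
  | .nil, _ => exact absurd rfl hne
  | .cons hba .nil, _ => exact absurd hba.symm hnadj
  | .cons hba (.cons hac q), hp =>
    refine ⟨_, _, hba, hac, ?_⟩
    have := SimpleGraph.dist_le q.reverse
    simp only [SimpleGraph.Walk.length_cons, SimpleGraph.Walk.length_reverse] at hp this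
    omega

lemma SimpleGraph.mem_iff_notMem_of_adj {V : Type*} {G : SimpleGraph V} {A B : Finset V}
    (hdisj : Disjoint A B)
    (hbip : ∀ i j, G.Adj i j → (i ∈ A ∧ j ∈ B) ∨ (i ∈ B ∧ j ∈ A))
    {i j : V} (h : G.Adj i j) : i ∈ B ↔ j ∉ B := by
  rcases hbip i j h with ⟨hi, hj⟩ | ⟨hi, hj⟩
  · simp [Finset.disjoint_left.mp hdisj hi, hj]
  · simp [Finset.disjoint_left.mp hdisj hj, hi]

section EdgeIdeal

variable {σ : Type*} (K : Type*) [CommSemiring K]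

noncomputable def edgeIdeal (G : SimpleGraph σ) : Ideal (MvPolynomial σ K) :=
  Ideal.span {f | ∃ i j, G.Adj i j ∧ f = X i * X j}

variable {K} {G : SimpleGraph σ}

lemma X_mul_X_mem_edgeIdeal {i j : σ} (h : G.Adj i j) :
    (X i * X j : MvPolynomial σ K) ∈ edgeIdeal K G :=
  Ideal.subset_span ⟨i, j, h, rfl⟩

lemma edgeIdeal_le_weightIdeal {w : σ → ℕ} {c : ℕ}
    (h : ∀ i j, G.Adj i j → c ≤ w i + w j) :
    edgeIdeal K G ≤ weightIdeal w c := by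
  refine Ideal.span_le.mpr ?_
  rintro _ ⟨i, j, hij, rfl⟩
  exact ((isWeightedHomogeneous_X K w i).mul (isWeightedHomogeneous_X K w j)).mem_weightIdeal
    (h i j hij)

end EdgeIdeal

section Witness

variable {σ : Type*} (K : Type*) [CommSemiring K]

noncomputable def colonWitness (x y : σ) (e : ℕ) (S : Finset σ) (a g : σ → σ) :
    MvPolynomial σ K :=
  X x ^ (e + 1) * X y ^ e * ∏ c ∈ S, X (a c) * X (g c)

variable {K} {x y : σ} {e : ℕ} {S : Finset σ} {a g : σ → σ}

lemma isWeightedHomogeneous_colonWitness (w : σ → ℕ) :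
    IsWeightedHomogeneous w (colonWitness K x y e S a g)
      ((e + 1) * w x + e * w y + ∑ c ∈ S, (w (a c) + w (g c))) := by
  simp only [← smul_eq_mul]
  exact (((isWeightedHomogeneous_X K w x).pow _).mul ((isWeightedHomogeneous_X K w y).pow _)).mul
    (.prod _ _ _ fun c _ => (isWeightedHomogeneous_X K w _).mul (isWeightedHomogeneous_X K w _))

lemma exists_colonWitness_eq_monomial : ∃ M, colonWitness K x y e S a g = monomial M 1 := by
  have hX : ∀ i, (X i : MvPolynomial σ K) ∈ MonoidHom.mrange (monomialOneHom K σ) :=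
    fun i => ⟨Finsupp.single i 1, rfl⟩
  obtain ⟨M, hM⟩ : colonWitness K x y e S a g ∈ MonoidHom.mrange (monomialOneHom K σ) :=
    mul_mem (mul_mem (pow_mem (hX x) _) (pow_mem (hX y) _))
      (prod_mem fun c _ => mul_mem (hX (a c)) (hX (g c)))
  exact ⟨M, hM.symm⟩

end Witness

section Bipartite

variable {σ K : Type*} [CommSemiring K] {G : SimpleGraph σ} {B S : Finset σ} {x : σ}
  {a g : σ → σ}

lemma X_mul_X_mul_prod_mem_pow_edgeIdeal (hS : ∀ b ∈ B, b ∉ S → G.Adj x b)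
    (hpar : ∀ c ∈ S,
      G.Adj c (a c) ∧ G.Adj (a c) (g c) ∧ g c ∈ B ∧ G.dist x (g c) < G.dist x c)
    {b : σ} (hb : b ∈ B) {T : Finset σ} (hTS : T ⊆ S)
    (hT : ∀ c ∈ S, G.dist x c ≤ G.dist x b → c ∈ T) :
    (X x * X b * ∏ c ∈ T, X (a c) * X (g c) : MvPolynomial σ K) ∈
      edgeIdeal K G ^ (T.card + 1) := by
  classical
  induction hd : G.dist x b using Nat.strong_induction_on generalizing b T with
  | _ d ih =>
  by_cases hxb : G.Adj x b
  · rw [pow_succ', ← Finset.prod_const]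
    exact Ideal.mul_mem_mul (X_mul_X_mem_edgeIdeal hxb)
      (Ideal.prod_mem_prod fun c hc => X_mul_X_mem_edgeIdeal (hpar c (hTS hc)).2.1)
  have hbS : b ∈ S := by_contra fun h => hxb (hS b hb h)
  have hbT : b ∈ T := hT b hbS le_rfl
  obtain ⟨hba, hag, hgB, hlt⟩ := hpar b hbS
  have hrest : (X x * X (g b) * ∏ c ∈ T.erase b, X (a c) * X (g c) : MvPolynomial σ K) ∈
      edgeIdeal K G ^ ((T.erase b).card + 1) := by
    refine ih _ (hd ▸ hlt) hgB ((T.erase_subset b).trans hTS) (fun c hc hcb => ?_) rfl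
    refine Finset.mem_erase.mpr ⟨?_, hT c hc (hcb.trans hlt.le)⟩
    rintro rfl
    exact absurd hcb (not_le.mpr hlt)
  rw [← Finset.mul_prod_erase T _ hbT, ← Finset.card_erase_add_one hbT, pow_succ',
    show (X x * X b * (X (a b) * X (g b) * ∏ c ∈ T.erase b, X (a c) * X (g c)) :
        MvPolynomial σ K) =
      X b * X (a b) * (X x * X (g b) * ∏ c ∈ T.erase b, X (a c) * X (g c)) by ring]
  exact Ideal.mul_mem_mul (X_mul_X_mem_edgeIdeal hba) hrest

lemma colon_pow_edgeIdeal_colonWitness_eq_span_X [Nontrivial K] {y : σ} {e : ℕ}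
    (hB : ∀ i j, G.Adj i j → (i ∈ B ↔ j ∉ B)) (hxB : x ∉ B) (hxy : G.Adj x y)
    (hS : ∀ b ∈ B, b ∉ S → G.Adj x b)
    (hpar : ∀ c ∈ S,
      G.Adj c (a c) ∧ G.Adj (a c) (g c) ∧ g c ∈ B ∧ G.dist x (g c) < G.dist x c) :
    (edgeIdeal K G ^ (S.card + 1 + e)).colon (Ideal.span {colonWitness K x y e S a g}) =
      Ideal.span (X '' (B : Set σ)) := by
  classical
  refine le_antisymm ?_ (Ideal.span_le.mpr ?_)
  · set w : σ → ℕ := fun i => if i ∈ (B : Set σ) then 1 else 0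
    have hyB : y ∈ B := by simpa [hxB] using hB x y hxy
    obtain ⟨M, hM⟩ := exists_colonWitness_eq_monomial (K := K) (x := x) (y := y) (e := e)
      (S := S) (a := a) (g := g)
    have hwM : Finsupp.weight w M = S.card + e := by
      have hhom := isWeightedHomogeneous_colonWitness (K := K) (x := x) (y := y) (e := e)
        (S := S) (a := a) (g := g) w
      rw [hM] at hhom
      rw [hhom (by simp), Finset.sum_congr rfl fun c hc => show w (a c) + w (g c) = 1 by
        obtain ⟨-, hag, hgB, -⟩ := hpar c hc
        simp [w, hgB, (hB _ _ hag).not.mpr (not_not.mpr hgB)]]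
      simp [w, hxB, hyB, add_comm]
    have hIw : edgeIdeal K G ≤ weightIdeal w 1 := edgeIdeal_le_weightIdeal fun i j hij => by
      by_cases hi : i ∈ B
      · simp [w, hi]
      · have hj : j ∈ B := by simpa [hi] using hB i j hij
        simp [w, hj]
    intro f hf
    rw [Ideal.mem_colon_span_singleton, hM] at hf
    have hmem := pow_le_weightIdeal hIw _ hf
    rw [show (S.card + 1 + e) * 1 = 1 + Finsupp.weight w M by omega] at hmem
    exact weightIdeal_indicator_le_span_X _ (mem_weightIdeal_of_mul_monomial_mem hmem)
  · rintro _ ⟨b, hb, rfl⟩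
    rw [SetLike.mem_coe, Ideal.mem_colon_span_singleton, colonWitness, pow_add,
      show (X b * (X x ^ (e + 1) * X y ^ e * ∏ c ∈ S, X (a c) * X (g c)) : MvPolynomial σ K) =
        X x * X b * (∏ c ∈ S, X (a c) * X (g c)) * (X x * X y) ^ e by ring]
    exact Ideal.mul_mem_mul
      (X_mul_X_mul_prod_mem_pow_edgeIdeal hS hpar hb subset_rfl fun c hc _ => hc)
      (Ideal.pow_mem_pow (X_mul_X_mem_edgeIdeal hxy) e)

theorem exists_isHomogeneous_colon_pow_edgeIdeal_eq_span_X [Nontrivial K] [Fintype σ]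
    [DecidableRel G.Adj] (hconn : G.Connected) (hB : ∀ i j, G.Adj i j → (i ∈ B ↔ j ∉ B))
    (hBne : B.Nonempty) (hxB : x ∉ B) {k : ℕ} (hk1 : 1 ≤ k)
    (hk : B.card + 1 - G.degree x ≤ k) :
    ∃ f : MvPolynomial σ K, f.IsHomogeneous (2 * k - 1) ∧
      (edgeIdeal K G ^ k).colon (Ideal.span {f}) = Ideal.span (X '' (B : Set σ)) := by
  classical
  obtain ⟨b₀, hb₀⟩ := hBne
  obtain ⟨p⟩ := hconn x b₀
  have hxy : G.Adj x p.snd :=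
    p.adj_snd (SimpleGraph.Walk.not_nil_of_ne fun h => hxB (h ▸ hb₀))
  set S := B \ G.neighborFinset x
  have hS : ∀ b ∈ B, b ∉ S → G.Adj x b := fun b hb hbS => by simpa [S, hb] using hbS
  have hNB : G.neighborFinset x ⊆ B := fun y hy => by
    simpa [hxB] using hB x y ((G.mem_neighborFinset x y).mp hy)
  have hScard : S.card = B.card - G.degree x := by
    rw [← G.card_neighborFinset_eq_degree]
    exact Finset.card_sdiff_of_subset hNB
  obtain ⟨e, rfl⟩ : ∃ e, k = S.card + 1 + e := ⟨k - 1 - S.card, by omega⟩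
  choose! a g hag using fun c (hc : c ∈ S) =>
    have ⟨hcB, hxc⟩ : c ∈ B ∧ c ∉ G.neighborFinset x := Finset.mem_sdiff.mp hc
    (hconn x c).exists_adj_adj_dist_lt (fun h => hxB (h ▸ hcB)) (by simpa using hxc)
  have hpar : ∀ c ∈ S,
      G.Adj c (a c) ∧ G.Adj (a c) (g c) ∧ g c ∈ B ∧ G.dist x (g c) < G.dist x c := by
    intro c hc
    obtain ⟨hca, hag, hlt⟩ := hag c hc
    have hcB : c ∈ B := (Finset.mem_sdiff.mp hc).1
    have haB : a c ∉ B := by simpa [hcB] using hB _ _ hca.symm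
    exact ⟨hca, hag, by simpa [haB] using hB _ _ hag, hlt⟩
  refine ⟨colonWitness K x p.snd e S a g, ?_, ?_⟩
  · show IsWeightedHomogeneous 1 _ _
    convert isWeightedHomogeneous_colonWitness (K := K) (x := x) (y := p.snd)
      (e := e) (S := S) (a := a) (g := g) 1 using 1
    simp only [Pi.one_apply, mul_one, Finset.sum_const, smul_eq_mul]
    omega
  · exact colon_pow_edgeIdeal_colonWitness_eq_span_X hB hxB hxy hS hpar

end Bipartite

theorem two_mul_sub_one_le_of_colon_pow_edgeIdeal_eq {σ K : Type*} [CommRing K] [IsDomain K]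
    {G : SimpleGraph σ} (hedge : ∃ i j, G.Adj i j) {f : MvPolynomial σ K} {p : Ideal _}
    {d k : ℕ} (hp : p.IsPrime) (hf : f.IsHomogeneous d)
    (h : (edgeIdeal K G ^ k).colon (Ideal.span {f}) = p) : 2 * k - 1 ≤ d := by
  obtain ⟨i, j, hij⟩ := hedge
  have hle : edgeIdeal K G ^ k ≤ p := h ▸ Ideal.le_colon
  have hijp : (X i * X j : MvPolynomial σ K) ∈ p :=
    hp.mem_of_pow_mem k (hle (Ideal.pow_mem_pow (X_mul_X_mem_edgeIdeal hij) k))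
  obtain ⟨v, hv⟩ : ∃ v, (X v : MvPolynomial σ K) ∈ p :=
    (hp.mem_or_mem hijp).elim (⟨i, ·⟩) (⟨j, ·⟩)
  have hf0 : f ≠ 0 := by
    rintro rfl
    exact hp.ne_top (h ▸ by simp)
  rw [← h, Ideal.mem_colon_span_singleton] at hv
  have := IsWeightedHomogeneous.le_of_mem_weightIdeal ((isHomogeneous_X K v).mul hf)
    (mul_ne_zero (X_ne_zero v) hf0)
    (pow_le_weightIdeal (edgeIdeal_le_weightIdeal (w := 1) (c := 2) fun _ _ _ => le_rfl) k hv)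
  omega

theorem stmt14 {K : Type*} [Field K] {n : ℕ}
    (G : SimpleGraph (Fin n)) [DecidableRel G.Adj]
    (hconn : G.Connected)
    (hedge : ∃ i j : Fin n, G.Adj i j)
    (A B : Finset (Fin n))
    (hA : A.Nonempty) (hB : B.Nonempty)
    (hdisj : Disjoint A B)
    (hbip : ∀ i j : Fin n, G.Adj i j → (i ∈ A ∧ j ∈ B) ∨ (i ∈ B ∧ j ∈ A))
    (I : Ideal (MvPolynomial (Fin n) K))
    (hI : I = Ideal.span {f | ∃ i j : Fin n, G.Adj i j ∧
      f = (X i : MvPolynomial (Fin n) K) * X j}) :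
    ∀ k : ℕ, 1 ≤ k →
      min (B.card + 1 - A.sup (fun v => G.degree v))
          (A.card + 1 - B.sup (fun v => G.degree v)) ≤ k →
      (vNumber (I ^ k) : ℤ) = 2 * k - 1 := by
  intro k hk1 hk
  obtain rfl : I = edgeIdeal K G := hI
  obtain ⟨x, hxA, hx⟩ := A.exists_mem_eq_sup hA fun v => G.degree v
  obtain ⟨y, hyB, hy⟩ := B.exists_mem_eq_sup hB fun v => G.degree v
  have hcolon : ∃ (f : MvPolynomial (Fin n) K) (p : Ideal _),
      p.IsPrime ∧ f.IsHomogeneous (2 * k - 1) ∧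
        (edgeIdeal K G ^ k).colon (Ideal.span {f}) = p := by
    rcases min_le_iff.mp hk with h | h
    · obtain ⟨f, hf, hfp⟩ := exists_isHomogeneous_colon_pow_edgeIdeal_eq_span_X (K := K) hconn
        (fun _ _ => G.mem_iff_notMem_of_adj hdisj hbip) hB (Finset.disjoint_left.mp hdisj hxA)
        hk1 (hx ▸ h)
      exact ⟨f, _, isPrime_span_X_image _, hf, hfp⟩
    · obtain ⟨f, hf, hfp⟩ := exists_isHomogeneous_colon_pow_edgeIdeal_eq_span_X (K := K) hconn
        (fun _ _ => G.mem_iff_notMem_of_adj hdisj.symm fun i j h => (hbip i j h).symm) hA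
        (Finset.disjoint_right.mp hdisj hyB) hk1 (hy ▸ h)
      exact ⟨f, _, isPrime_span_X_image _, hf, hfp⟩
  rw [vNumber_eq_of_forall_le hcolon fun f p d hp hf h =>
    two_mul_sub_one_le_of_colon_pow_edgeIdeal_eq hedge hp hf h]
  omega
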